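/- arXiv:2405.08407 — 2 statements merged into one kernel-verified Lean document; each statement's English description precedes it below -/
import Mathlib

section
/- Let n ≥ 2, m > 0 and set p̃ = 1 + 2m/((m+2)n+2). Define D(p) = ((m+2)n - 2)p² - (m+2)(n+2)p - (2m+2). Then D(1) < 0 and D(p̃) < 0, hence D(p) < 0 for all p ∈ [1, p̃]. -/
/-- With p̃ = 1 + 2m/((m+2)n+2) and D(p) = ((m+2)n-2)p² - (m+2)(n+2)p - (2m+2),
we have D(1) < 0, D(p̃) < 0, and D(p) < 0 for all p ∈ [1, p̃]. -/
theorem D_neg_on_interval (n : ℕ) (hn : 2 ≤ n) (m : ℝ) (hm : 0 < m)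
    (ptilde : ℝ) (hpt : ptilde = 1 + 2 * m / ((m + 2) * n + 2))
    (D : ℝ → ℝ)
    (hD : ∀ p, D p = ((m + 2) * n - 2) * p ^ 2 - (m + 2) * ((n : ℝ) + 2) * p - (2 * m + 2)) :
    D 1 < 0 ∧ D ptilde < 0 ∧ ∀ p ∈ Set.Icc (1 : ℝ) ptilde, D p < 0 := by
  have hn' : (2 : ℝ) ≤ (n : ℝ) := by exact_mod_cast hn
  have hd : (0 : ℝ) < (m + 2) * n + 2 := by nlinarith
  have hpt' : ptilde ≥ 1 := by
    rw [hpt]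
    have : 2 * m / ((m + 2) * n + 2) ≥ 0 := by positivity
    linarith
  have key : ∀ p ∈ Set.Icc (1 : ℝ) ptilde, D p < 0 := by
    intro p hp
    obtain ⟨hp1, hp2⟩ := hp
    rw [hD]
    have hq : ptilde * ((m + 2) * n + 2) = (m + 2) * n + 2 + 2 * m := by
      rw [hpt]; field_simp
    -- a * ptilde < b
    have ha : (0 : ℝ) < (m + 2) * n - 2 := by nlinarith
    have hab : ((m + 2) * n - 2) * ptilde < (m + 2) * ((n : ℝ) + 2) := by
      nlinarith [hq, mul_pos hm hd, mul_pos hm hm]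
    have h0p : (0:ℝ) ≤ p := by linarith
    nlinarith [mul_nonneg (mul_nonneg ha.le h0p) (by linarith : (0:ℝ) ≤ ptilde - p),
      mul_nonneg (by linarith : (0:ℝ) ≤ p - 1)
        (by linarith : (0:ℝ) ≤ (m + 2) * ((n : ℝ) + 2) - ((m + 2) * n - 2) * ptilde)]
  refine ⟨key 1 ⟨le_refl 1, hpt'⟩, key ptilde ⟨hpt', le_refl _⟩, key⟩
end

section
/- Let n ≥ 5 and μ₃(n) be the positive root of μ² + (n-3)μ - 2(n-3) = 0. For μ ∈ (1, μ₃(n)], 1 + 4(μ² - 2μ + 2)/(μ(n-μ-1)) ≤ 4/μ - 1, while for μ ∈ (μ₃(n), 2) with n - μ - 1 > 0, the reverse strict inequality holds. -/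
/-- Comparison of 1 + 4(μ²-2μ+2)/(μ(n-μ-1)) with 4/μ - 1 around μ₃(n) for n ≥ 5. -/
theorem pstar_vs_threshold_high_dim (n : ℕ) (hn : 5 ≤ n) (μ₃ : ℝ)
    (hμ₃ : μ₃ = (-((n : ℝ) - 3) + Real.sqrt ((n : ℝ) ^ 2 + 2 * n - 15)) / 2) :
    (∀ μ : ℝ, 1 < μ → μ ≤ μ₃ →
      1 + 4 * (μ ^ 2 - 2 * μ + 2) / (μ * ((n : ℝ) - μ - 1)) ≤ 4 / μ - 1) ∧
    (∀ μ : ℝ, μ₃ < μ → μ < 2 → (n : ℝ) - μ - 1 > 0 →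
      1 + 4 * (μ ^ 2 - 2 * μ + 2) / (μ * ((n : ℝ) - μ - 1)) > 4 / μ - 1) := by
  have hn5 : (5 : ℝ) ≤ (n : ℝ) := by exact_mod_cast hn
  set s : ℝ := Real.sqrt ((n : ℝ) ^ 2 + 2 * n - 15) with hs_def
  have hDnn : (0 : ℝ) ≤ (n : ℝ) ^ 2 + 2 * n - 15 := by nlinarith
  have hs2 : s ^ 2 = (n : ℝ) ^ 2 + 2 * n - 15 := Real.sq_sqrt hDnn
  have hsnn : 0 ≤ s := Real.sqrt_nonneg _
  -- μ₃ is a root of the quadratic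
  have hroot : μ₃ ^ 2 + ((n : ℝ) - 3) * μ₃ - 2 * ((n : ℝ) - 3) = 0 := by
    rw [hμ₃]; nlinarith [hs2]
  have hμ₃pos : 0 < μ₃ := by
    have hsgt : (n : ℝ) - 3 < s := by nlinarith [hs2, hsnn]
    rw [hμ₃]; linarith
  have hμ₃lt2 : μ₃ < 2 := by
    have hslt : s < (n : ℝ) + 1 := by nlinarith [hs2, hsnn]
    rw [hμ₃]; linarith
  constructor
  · intro μ h1 h2
    have hμ2 : μ < 2 := lt_of_le_of_lt h2 hμ₃lt2
    have hdpos : 0 < (n : ℝ) - μ - 1 := by linarith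
    have hμpos : 0 < μ := by linarith
    have hd : 0 < μ * ((n : ℝ) - μ - 1) := mul_pos hμpos hdpos
    have key : μ ^ 2 + ((n : ℝ) - 3) * μ - 2 * ((n : ℝ) - 3) ≤ 0 := by
      nlinarith [hroot, mul_nonneg (sub_nonneg.mpr h2) (by linarith : (0:ℝ) ≤ μ + μ₃ + (n : ℝ) - 3)]
    rw [← sub_nonneg]
    have heq : 4 / μ - 1 - (1 + 4 * (μ ^ 2 - 2 * μ + 2) / (μ * ((n : ℝ) - μ - 1)))
        = (-2 * (μ ^ 2 + ((n : ℝ) - 3) * μ - 2 * ((n : ℝ) - 3))) / (μ * ((n : ℝ) - μ - 1)) := by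
      field_simp
      ring
    rw [heq]
    exact div_nonneg (by linarith) hd.le
  · intro μ h1 h2 hdpos
    have hμpos : 0 < μ := lt_trans hμ₃pos h1
    have hd : 0 < μ * ((n : ℝ) - μ - 1) := mul_pos hμpos hdpos
    have key : 0 < μ ^ 2 + ((n : ℝ) - 3) * μ - 2 * ((n : ℝ) - 3) := by
      nlinarith [hroot, mul_pos (sub_pos.mpr h1) (by linarith : (0:ℝ) < μ + μ₃ + (n : ℝ) - 3)]
    rw [gt_iff_lt, ← sub_pos]
    have heq : 1 + 4 * (μ ^ 2 - 2 * μ + 2) / (μ * ((n : ℝ) - μ - 1)) - (4 / μ - 1)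
        = (2 * (μ ^ 2 + ((n : ℝ) - 3) * μ - 2 * ((n : ℝ) - 3))) / (μ * ((n : ℝ) - μ - 1)) := by
      field_simp
      ring
    rw [heq]
    exact div_pos (by linarith) hd
end
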